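/- arXiv:2505.13684 — 15 statements merged into one kernel-verified Lean document; each statement's English description precedes it below -/
import Mathlib

section
/- Let d ≥ 2 be a natural number and let ζ ∈ ℂ be a primitive d-th root of unity. There is no nonzero vector v = (v₁, v₂, v₃, v₄, v₅) ∈ ℂ⁵ satisfying v₁^d + v₂^d + v₃^d + v₄^d + v₅^d = 0 such that for every i ∈ {1,2,3,4} the vector obtained from v by multiplying its i-th coordinate by ζ (and leaving the other coordinates unchanged) is a complex scalar multiple of v. -/
/-!
A vector that the scaling of one coordinate by `ζ ≠ 1` maps to a multiple of itself lies in one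
of the two eigenspaces of that scaling: either it vanishes at that coordinate or it is supported
there alone. A nonzero vector supported at a single coordinate does not satisfy the Fermat
equation, so `v` vanishes at the first four coordinates; then it is supported at the fifth, and
the Fermat equation forces `v = 0`.
-/

theorem eq_zero_or_forall_ne_eq_zero_of_scale_eq_smul {K ι : Type*} [Field K] [DecidableEq ι]
    {ζ c : K} (hζ : ζ ≠ 1) {v : ι → K} {i : ι}
    (h : (fun j => if j = i then ζ * v j else v j) = c • v) :
    v i = 0 ∨ ∀ j, j ≠ i → v j = 0 := by
  refine or_iff_not_imp_left.mpr fun hvi j hji => ?_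
  have hc : c = ζ := mul_right_cancel₀ hvi (by simpa using (congrFun h i).symm)
  have hvj : v j = ζ * v j := by simpa [hji, hc] using congrFun h j
  have : (ζ - 1) * v j = 0 := by linear_combination -hvj
  exact (mul_eq_zero.mp this).resolve_left (sub_ne_zero.mpr hζ)

theorem apply_eq_zero_of_sum_pow_eq_zero {R ι : Type*} [CommSemiring R] [NoZeroDivisors R]
    [Fintype ι] {v : ι → R} {d : ℕ} (hd : d ≠ 0) (hsum : ∑ j, v j ^ d = 0)
    (i : ι) (hv : ∀ j, j ≠ i → v j = 0) : v i = 0 := by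
  rw [Fintype.sum_eq_single i fun j hj => by simp [hv j hj, hd]] at hsum
  exact pow_eq_zero_iff hd |>.mp hsum

theorem stmt_0 (d : ℕ) (hd : 2 ≤ d) (ζ : ℂ) (hζ : IsPrimitiveRoot ζ d) :
    ¬ ∃ v : Fin 5 → ℂ, v ≠ 0 ∧ (∑ i, v i ^ d) = 0 ∧
      ∀ i : Fin 5, i ≠ 4 →
        ∃ c : ℂ, (fun j => if j = i then ζ * v j else v j) = c • v := by
  rintro ⟨v, hv0, hsum, hfix⟩
  have hd0 : d ≠ 0 := by omega
  have hζ1 : ζ ≠ 1 := hζ.ne_one (by omega)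
  have hoff : ∀ i : Fin 5, i ≠ 4 → v i = 0 := fun i hi => by
    obtain ⟨c, hc⟩ := hfix i hi
    exact (eq_zero_or_forall_ne_eq_zero_of_scale_eq_smul hζ1 hc).elim id
      (apply_eq_zero_of_sum_pow_eq_zero hd0 hsum i)
  have hv4 : v 4 = 0 := apply_eq_zero_of_sum_pow_eq_zero hd0 hsum 4 hoff
  exact hv0 <| funext fun j => if hj : j = 4 then hj ▸ hv4 else hoff j hj
end

section
/- There is no nonzero vector v = (v₁, …, v₇) ∈ ℂ⁷ satisfying the three equations Σᵢ₌₁⁷ vᵢ² = 0, Σᵢ₌₁⁷ i·vᵢ² = 0, and Σᵢ₌₁⁷ 2ⁱ·vᵢ² = 0, such that for every i ∈ {1,…,6} the vector obtained from v by negating its i-th coordinate (and leaving the other coordinates unchanged) is a complex scalar multiple of v. -/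
theorem stmt_1 :
    ¬ ∃ v : Fin 7 → ℂ, v ≠ 0 ∧
      (∑ i, v i ^ 2) = 0 ∧
      (∑ i : Fin 7, ((i : ℕ) + 1 : ℂ) * v i ^ 2) = 0 ∧
      (∑ i : Fin 7, (2 : ℂ) ^ ((i : ℕ) + 1) * v i ^ 2) = 0 ∧
      ∀ i : Fin 7, i ≠ 6 →
        ∃ c : ℂ, (fun j => if j = i then -v j else v j) = c • v := by
  rintro ⟨v, hv, h1, -, -, hc⟩
  by_cases h : ∀ i : Fin 7, i ≠ 6 → v i = 0
  · have h6 : v 6 ^ 2 = 0 := by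
      rw [Fin.sum_univ_seven, h 0 (by decide), h 1 (by decide), h 2 (by decide),
        h 3 (by decide), h 4 (by decide), h 5 (by decide)] at h1
      linear_combination h1
    have h6' : v 6 = 0 := by
      exact pow_eq_zero_iff (two_ne_zero) |>.mp h6
    apply hv
    funext i
    fin_cases i <;> simp_all
  · push_neg at h
    obtain ⟨i, hi6, hvi⟩ := h
    obtain ⟨c, hcE⟩ := hc i hi6
    have hci : -v i = c * v i := by simpa using congr_fun hcE i
    have hc1 : c = -1 := by
      have := mul_right_cancel₀ hvi (by linear_combination -hci : c * v i = (-1) * v i)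
      exact this
    have hj : ∀ j : Fin 7, j ≠ i → v j = 0 := by
      intro j hji
      have : v j = c * v j := by simpa [hji] using congr_fun hcE j
      rw [hc1] at this
      linear_combination this / 2
    have hsum : (∑ j, v j ^ 2) = v i ^ 2 := by
      apply Finset.sum_eq_single
      · intro j _ hji; rw [hj j hji]; ring
      · simp
    rw [hsum] at h1
    exact hvi (pow_eq_zero_iff two_ne_zero |>.mp h1)
end

section
/- Let a₁, …, a₆ be arbitrary complex numbers. There is no nonzero vector v = (v₁, …, v₆) ∈ ℂ⁶ satisfying Σᵢ₌₁⁶ vᵢ² = 0 and Σᵢ₌₁⁶ aᵢ·vᵢ² = 0 such that for every i ∈ {1,…,5} the vector obtained from v by negating its i-th coordinate (and leaving the other coordinates unchanged) is a complex scalar multiple of v. -/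
theorem stmt_2 (a : Fin 6 → ℂ) :
    ¬ ∃ v : Fin 6 → ℂ, v ≠ 0 ∧
      (∑ i, v i ^ 2) = 0 ∧ (∑ i, a i * v i ^ 2) = 0 ∧
      ∀ i : Fin 6, i ≠ 5 →
        ∃ c : ℂ, (fun j => if j = i then -v j else v j) = c • v := by
  rintro ⟨v, hv, h1, _h2, hscal⟩
  have key : ∀ i : Fin 6, i ≠ 5 → v i ≠ 0 → ∀ j, j ≠ i → v j = 0 := by
    intro i hi hvi j hj
    obtain ⟨c, hc⟩ := hscal i hi
    have hi' := congrFun hc i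
    have hj' := congrFun hc j
    simp [hj] at hi' hj'
    have hc1 : c = -1 := mul_right_cancel₀ hvi (by linear_combination -hi')
    rw [hc1] at hj'
    have h2vj : (2 : ℂ) * v j = 0 := by linear_combination hj'
    simpa using h2vj
  by_cases hex : ∃ i : Fin 6, i ≠ 5 ∧ v i ≠ 0
  · obtain ⟨i, hi5, hvi⟩ := hex
    have hsum : (∑ j, v j ^ 2) = v i ^ 2 :=
      Finset.sum_eq_single_of_mem i (Finset.mem_univ i)
        (fun j _ hj => by rw [key i hi5 hvi j hj]; ring)
    rw [hsum] at h1
    exact hvi (pow_eq_zero_iff (by norm_num) |>.mp h1)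
  · push_neg at hex
    have h5 : v 5 = 0 := by
      have hsum : (∑ j, v j ^ 2) = v 5 ^ 2 :=
        Finset.sum_eq_single_of_mem 5 (Finset.mem_univ _)
          (fun j _ hj => by rw [hex j hj]; ring)
      rw [hsum] at h1
      exact pow_eq_zero_iff (by norm_num) |>.mp h1
    apply hv
    funext j
    by_cases hj : j = 5
    · simpa [hj] using h5
    · simpa using hex j hj
end

section
/- There is no nonzero vector v = (v₁, v₂, v₃, v₄) ∈ ℂ⁴ such that both (v₂, v₁, v₄, v₃) is a complex scalar multiple of v and (v₃, −v₄, v₁, −v₂) is a complex scalar multiple of v. -/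
theorem stmt_4 :
    ¬ ∃ v₁ v₂ v₃ v₄ : ℂ, (v₁, v₂, v₃, v₄) ≠ (0, 0, 0, 0) ∧
      (∃ c : ℂ, (v₂, v₁, v₄, v₃) = (c * v₁, c * v₂, c * v₃, c * v₄)) ∧
      (∃ c : ℂ, (v₃, -v₄, v₁, -v₂) = (c * v₁, c * v₂, c * v₃, c * v₄)) := by
  rintro ⟨v₁, v₂, v₃, v₄, hne, ⟨c, hc⟩, ⟨d, hd⟩⟩
  simp only [Prod.mk.injEq] at hc hd hne
  obtain ⟨h1, h2, h3, h4⟩ := hc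
  obtain ⟨g1, g2, g3, g4⟩ := hd
  by_cases hv : v₁ = 0
  · subst hv
    have hv2 : v₂ = 0 := by rw [h1]; ring
    have hv3 : v₃ = 0 := by rw [g1]; ring
    have hv4 : v₄ = 0 := by rw [h3, hv3]; ring
    exact hne (by simp [hv2, hv3, hv4])
  · have hc2 : c ^ 2 = 1 := by
      have h : (c ^ 2 - 1) * v₁ = 0 := by linear_combination -(c * h1) - h2
      rcases mul_eq_zero.mp h with h | h
      · linear_combination h
      · exact absurd h hv
    have hd2 : d ^ 2 = 1 := by
      have h : (d ^ 2 - 1) * v₁ = 0 := by linear_combination -(d * g1) - g3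
      rcases mul_eq_zero.mp h with h | h
      · linear_combination h
      · exact absurd h hv
    have key : c * d * v₁ = -(c * d * v₁) := by
      calc c * d * v₁ = c * v₃ := by rw [g1]; ring
        _ = v₄ := h3.symm
        _ = -(d * v₂) := by rw [← g2]; ring
        _ = -(c * d * v₁) := by rw [h1]; ring
    have : c * d * v₁ = 0 := by linear_combination key / 2
    rcases mul_eq_zero.mp this with h | h
    · rcases mul_eq_zero.mp h with h | h
      · rw [h] at hc2; simp at hc2
      · rw [h] at hd2; simp at hd2
    · exact hv h
end

section
/- There is no nonzero vector v = (v₁, v₂, v₃, v₄, v₅) ∈ ℂ⁵ satisfying v₁² + v₂² + v₃² + v₄² + v₅² = 0 such that each of the three vectors (−v₁, v₂, v₃, v₄, v₅), (v₁, −v₂, −v₃, v₄, v₅), and (v₁, −v₂, v₃, −v₄, v₅) is a complex scalar multiple of v. -/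
theorem stmt_5 :
    ¬ ∃ v₁ v₂ v₃ v₄ v₅ : ℂ,
      (v₁, v₂, v₃, v₄, v₅) ≠ (0, 0, 0, 0, 0) ∧
      v₁ ^ 2 + v₂ ^ 2 + v₃ ^ 2 + v₄ ^ 2 + v₅ ^ 2 = 0 ∧
      (∃ c : ℂ, (-v₁, v₂, v₃, v₄, v₅) = (c * v₁, c * v₂, c * v₃, c * v₄, c * v₅)) ∧
      (∃ c : ℂ, (v₁, -v₂, -v₃, v₄, v₅) = (c * v₁, c * v₂, c * v₃, c * v₄, c * v₅)) ∧
      (∃ c : ℂ, (v₁, -v₂, v₃, -v₄, v₅) = (c * v₁, c * v₂, c * v₃, c * v₄, c * v₅)) := by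
  rintro ⟨v₁, v₂, v₃, v₄, v₅, hne, hq, ⟨a, ha⟩, ⟨b, hb⟩, ⟨c, hc⟩⟩
  obtain ⟨ha1, ha2, ha3, ha4, ha5⟩ := Prod.mk.injEq .. ▸ Prod.mk.injEq .. ▸
    Prod.mk.injEq .. ▸ Prod.mk.injEq .. ▸ ha
  obtain ⟨hb1, hb2, hb3, hb4, hb5⟩ := Prod.mk.injEq .. ▸ Prod.mk.injEq .. ▸
    Prod.mk.injEq .. ▸ Prod.mk.injEq .. ▸ hb
  obtain ⟨hc1, hc2, hc3, hc4, hc5⟩ := Prod.mk.injEq .. ▸ Prod.mk.injEq .. ▸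
    Prod.mk.injEq .. ▸ Prod.mk.injEq .. ▸ hc
  -- all pairwise products vanish
  have p12 : v₁ * v₂ = 0 := by linear_combination (v₁ / 2) * ha2 - (v₂ / 2) * ha1
  have p13 : v₁ * v₃ = 0 := by linear_combination (v₁ / 2) * ha3 - (v₃ / 2) * ha1
  have p14 : v₁ * v₄ = 0 := by linear_combination (v₁ / 2) * ha4 - (v₄ / 2) * ha1
  have p15 : v₁ * v₅ = 0 := by linear_combination (v₁ / 2) * ha5 - (v₅ / 2) * ha1
  have p24 : v₂ * v₄ = 0 := by linear_combination (v₂ / 2) * hb4 - (v₄ / 2) * hb2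
  have p25 : v₂ * v₅ = 0 := by linear_combination (v₂ / 2) * hb5 - (v₅ / 2) * hb2
  have p34 : v₃ * v₄ = 0 := by linear_combination (v₃ / 2) * hb4 - (v₄ / 2) * hb3
  have p35 : v₃ * v₅ = 0 := by linear_combination (v₃ / 2) * hb5 - (v₅ / 2) * hb3
  have p23 : v₂ * v₃ = 0 := by linear_combination (v₂ / 2) * hc3 - (v₃ / 2) * hc2
  have p45 : v₄ * v₅ = 0 := by linear_combination (v₄ / 2) * hc5 - (v₅ / 2) * hc4
  have h1 : v₁ = 0 := by
    have : v₁ ^ 4 = 0 := by linear_combination v₁ ^ 2 * hq - v₁ * v₂ * p12 -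
      v₁ * v₃ * p13 - v₁ * v₄ * p14 - v₁ * v₅ * p15
    exact pow_eq_zero_iff (by norm_num) |>.mp this
  have h2 : v₂ = 0 := by
    have : v₂ ^ 4 = 0 := by linear_combination v₂ ^ 2 * hq - v₁ * v₂ * p12 -
      v₂ * v₃ * p23 - v₂ * v₄ * p24 - v₂ * v₅ * p25
    exact pow_eq_zero_iff (by norm_num) |>.mp this
  have h3 : v₃ = 0 := by
    have : v₃ ^ 4 = 0 := by linear_combination v₃ ^ 2 * hq - v₁ * v₃ * p13 -
      v₂ * v₃ * p23 - v₃ * v₄ * p34 - v₃ * v₅ * p35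
    exact pow_eq_zero_iff (by norm_num) |>.mp this
  have h4 : v₄ = 0 := by
    have : v₄ ^ 4 = 0 := by linear_combination v₄ ^ 2 * hq - v₁ * v₄ * p14 -
      v₂ * v₄ * p24 - v₃ * v₄ * p34 - v₄ * v₅ * p45
    exact pow_eq_zero_iff (by norm_num) |>.mp this
  have h5 : v₅ = 0 := by
    have : v₅ ^ 4 = 0 := by linear_combination v₅ ^ 2 * hq - v₁ * v₅ * p15 -
      v₂ * v₅ * p25 - v₃ * v₅ * p35 - v₄ * v₅ * p45
    exact pow_eq_zero_iff (by norm_num) |>.mp this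
  exact hne (by simp [h1, h2, h3, h4, h5])
end

section
/- There is no nonzero vector v = (v₀, v₁, v₂, v₃) ∈ ℂ⁴ such that both (−v₀, −v₁, v₂, v₃) is a complex scalar multiple of v and (v₃, v₂, v₁, v₀) is a complex scalar multiple of v. -/
theorem stmt_6 :
    ¬ ∃ v₀ v₁ v₂ v₃ : ℂ, (v₀, v₁, v₂, v₃) ≠ (0, 0, 0, 0) ∧
      (∃ c : ℂ, (-v₀, -v₁, v₂, v₃) = (c * v₀, c * v₁, c * v₂, c * v₃)) ∧
      (∃ c : ℂ, (v₃, v₂, v₁, v₀) = (c * v₀, c * v₁, c * v₂, c * v₃)) := by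
  rintro ⟨v₀, v₁, v₂, v₃, hne, ⟨c, hc⟩, ⟨d, hd⟩⟩
  simp only [Prod.mk.injEq] at hc hd
  obtain ⟨h1, h2, h3, h4⟩ := hc
  obtain ⟨g1, g2, g3, g4⟩ := hd
  apply hne
  by_cases hc1 : c = -1
  · subst hc1
    have hv2 : v₂ = 0 := by linear_combination h3 / 2
    have hv3 : v₃ = 0 := by linear_combination h4 / 2
    have hv0 : v₀ = 0 := by rw [hv3] at g4; linear_combination g4
    have hv1 : v₁ = 0 := by rw [hv2] at g3; linear_combination g3
    simp [hv0, hv1, hv2, hv3]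
  · have hv0 : v₀ = 0 := by
      have : (c + 1) * v₀ = 0 := by linear_combination -h1
      rcases mul_eq_zero.1 this with h' | h'
      · exact absurd (by linear_combination h') hc1
      · exact h'
    have hv1 : v₁ = 0 := by
      have : (c + 1) * v₁ = 0 := by linear_combination -h2
      rcases mul_eq_zero.1 this with h' | h'
      · exact absurd (by linear_combination h') hc1
      · exact h'
    have hv3 : v₃ = 0 := by rw [hv0] at g1; linear_combination g1
    have hv2 : v₂ = 0 := by rw [hv1] at g2; linear_combination g2
    simp [hv0, hv1, hv2, hv3]
end

section
/- Let ω ∈ ℂ be a primitive cube root of unity. There are no nonzero vectors x = (x₁, x₂, x₃) ∈ ℂ³ and y = (y₁, y₂, y₃) ∈ ℂ³ with x₁y₁ + x₂y₂ + x₃y₃ = 0 such that each of the following four vectors is a complex scalar multiple of the corresponding one: (x₂, x₃, x₁) of x, (y₂, y₃, y₁) of y, (ω²x₁, ωx₂, x₃) of x, and (ωy₁, ω²y₂, y₃) of y. -/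
theorem stmt_7 (ω : ℂ) (hω : IsPrimitiveRoot ω 3) :
    ¬ ∃ x₁ x₂ x₃ y₁ y₂ y₃ : ℂ,
      (x₁, x₂, x₃) ≠ (0, 0, 0) ∧ (y₁, y₂, y₃) ≠ (0, 0, 0) ∧
      x₁ * y₁ + x₂ * y₂ + x₃ * y₃ = 0 ∧
      (∃ c : ℂ, (x₂, x₃, x₁) = (c * x₁, c * x₂, c * x₃)) ∧
      (∃ c : ℂ, (y₂, y₃, y₁) = (c * y₁, c * y₂, c * y₃)) ∧
      (∃ c : ℂ, (ω ^ 2 * x₁, ω * x₂, x₃) = (c * x₁, c * x₂, c * x₃)) ∧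
      (∃ c : ℂ, (ω * y₁, ω ^ 2 * y₂, y₃) = (c * y₁, c * y₂, c * y₃)) := by
  rintro ⟨x₁, x₂, x₃, y₁, y₂, y₃, hx, -, -, ⟨c, hc⟩, -, ⟨e, he⟩, -⟩
  have hω0 : ω ≠ 0 := hω.ne_zero (by norm_num)
  have hω1 : ω ≠ 1 := hω.ne_one (by norm_num)
  obtain ⟨hc1, hc2, hc3⟩ : x₂ = c * x₁ ∧ x₃ = c * x₂ ∧ x₁ = c * x₃ := by
    simpa [Prod.ext_iff] using hc
  obtain ⟨he1, he2, he3⟩ : ω ^ 2 * x₁ = e * x₁ ∧ ω * x₂ = e * x₂ ∧ x₃ = e * x₃ := by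
    simpa [Prod.ext_iff] using he
  have hx1 : x₁ ≠ 0 := by
    rintro rfl
    have h2 : x₂ = 0 := by rw [hc1, mul_zero]
    have h3 : x₃ = 0 := by rw [hc2, h2, mul_zero]
    exact hx (by rw [h2, h3])
  have heω : e = ω ^ 2 := by
    have := mul_right_cancel₀ hx1 he1
    exact this.symm
  have hx2 : x₂ = 0 := by
    by_contra h
    have := mul_right_cancel₀ h (heω ▸ he2)
    have h2 : ω * 1 = ω * ω := by rw [mul_one]; linear_combination this
    exact hω1 (mul_left_cancel₀ hω0 h2).symm
  apply hx1
  rw [hc3, hc2, hx2, mul_zero, mul_zero]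
end

section
/- Let ω ∈ ℂ be a primitive cube root of unity and let λ ∈ ℂ. There are no nonzero vectors (u, v, w) ∈ ℂ³ and (x, y, z) ∈ ℂ³ satisfying vwx² + uwy² + uvz² + yzu² + xzv² + xyw² + λ(u²x² + v²y² + w²z²) = 0 such that each of the following four vectors is a complex scalar multiple of the corresponding one: (v, w, u) of (u, v, w), (y, z, x) of (x, y, z), (u, ωv, ω²w) of (u, v, w), and (ω²x, ωy, z) of (x, y, z). -/
theorem stmt_8 (ω : ℂ) (hω : IsPrimitiveRoot ω 3) (lam : ℂ) :
    ¬ ∃ u v w x y z : ℂ,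
      (u, v, w) ≠ (0, 0, 0) ∧ (x, y, z) ≠ (0, 0, 0) ∧
      v * w * x ^ 2 + u * w * y ^ 2 + u * v * z ^ 2 + y * z * u ^ 2 + x * z * v ^ 2
        + x * y * w ^ 2 + lam * (u ^ 2 * x ^ 2 + v ^ 2 * y ^ 2 + w ^ 2 * z ^ 2) = 0 ∧
      (∃ c : ℂ, (v, w, u) = (c * u, c * v, c * w)) ∧
      (∃ c : ℂ, (y, z, x) = (c * x, c * y, c * z)) ∧
      (∃ c : ℂ, (u, ω * v, ω ^ 2 * w) = (c * u, c * v, c * w)) ∧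
      (∃ c : ℂ, (ω ^ 2 * x, ω * y, z) = (c * x, c * y, c * z)) := by
  rintro ⟨u, v, w, x, y, z, hne, -, -, ⟨c, hc⟩, -, ⟨e, he⟩, -⟩
  simp only [Prod.mk.injEq] at hc he hne
  obtain ⟨h1, h2, h3⟩ := hc
  obtain ⟨h4, h5, -⟩ := he
  have hu : u ≠ 0 := by
    intro hu0
    apply hne
    rw [hu0, mul_zero] at h1
    rw [h1, mul_zero] at h2
    rw [hu0, h1, h2]
  have hv : v ≠ 0 := by
    intro hv0
    rw [hv0, mul_zero] at h2
    exact hu (by rw [h3, h2, mul_zero])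
  have he1 : e = 1 := mul_right_cancel₀ hu (by rw [one_mul, ← h4])
  have : ω = 1 := by
    rw [he1, one_mul] at h5
    exact mul_right_cancel₀ hv (by rw [one_mul]; exact h5)
  exact hω.ne_one (by norm_num) this
end

section
/- There are no nonzero vectors x = (x₁, x₂, x₃, x₄) ∈ ℂ⁴ and y = (y₁, y₂, y₃, y₄) ∈ ℂ⁴ satisfying the three equations x₁y₁² + x₂y₂² + x₃y₃² + x₄y₄² = 0, x₁² + x₂² + x₃² + x₄² = 0, and y₁ + y₂ + y₃ + y₄ = 0, such that each of the following four vectors is a complex scalar multiple of the corresponding one: (x₂, x₁, x₄, x₃) of x, (y₂, y₁, y₄, y₃) of y, (x₄, x₃, x₂, x₁) of x, and (y₄, y₃, y₂, y₁) of y. -/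
theorem stmt_9 :
    ¬ ∃ x₁ x₂ x₃ x₄ y₁ y₂ y₃ y₄ : ℂ,
      (x₁, x₂, x₃, x₄) ≠ (0, 0, 0, 0) ∧ (y₁, y₂, y₃, y₄) ≠ (0, 0, 0, 0) ∧
      x₁ * y₁ ^ 2 + x₂ * y₂ ^ 2 + x₃ * y₃ ^ 2 + x₄ * y₄ ^ 2 = 0 ∧
      x₁ ^ 2 + x₂ ^ 2 + x₃ ^ 2 + x₄ ^ 2 = 0 ∧
      y₁ + y₂ + y₃ + y₄ = 0 ∧
      (∃ c : ℂ, (x₂, x₁, x₄, x₃) = (c * x₁, c * x₂, c * x₃, c * x₄)) ∧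
      (∃ c : ℂ, (y₂, y₁, y₄, y₃) = (c * y₁, c * y₂, c * y₃, c * y₄)) ∧
      (∃ c : ℂ, (x₄, x₃, x₂, x₁) = (c * x₁, c * x₂, c * x₃, c * x₄)) ∧
      (∃ c : ℂ, (y₄, y₃, y₂, y₁) = (c * y₁, c * y₂, c * y₃, c * y₄)) := by
  rintro ⟨x₁, x₂, x₃, x₄, y₁, y₂, y₃, y₄, hx, -, -, h2, -, ⟨c, hc⟩, -, ⟨d, hd⟩, -⟩
  simp only [Prod.mk.injEq] at hc hd
  obtain ⟨e1, e2, e3, e4⟩ := hc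
  obtain ⟨f1, f2, f3, f4⟩ := hd
  -- e1 : x₂ = c * x₁, e2 : x₁ = c * x₂, e3 : x₄ = c * x₃, e4 : x₃ = c * x₄
  -- f1 : x₄ = d * x₁, f2 : x₃ = d * x₂, f3 : x₂ = d * x₃, f4 : x₁ = d * x₄
  have hsq : x₁ ^ 2 = 0 := by
    linear_combination (h2 + x₁ * e2 - x₂ * e1 + 2 * x₁ * f4 - 2 * x₄ * f1
      + x₄ * e3 - x₃ * e4) / 4
  have h1 : x₁ = 0 := (pow_eq_zero_iff two_ne_zero).mp hsq
  apply hx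
  have h2' : x₂ = 0 := by rw [e1, h1, mul_zero]
  have h4 : x₄ = 0 := by rw [f1, h1, mul_zero]
  have h3 : x₃ = 0 := by rw [f2, h2', mul_zero]
  simp [h1, h2', h3, h4]
end

section
/- There are no nonzero vectors (x₀, x₁) ∈ ℂ², (y₀, y₁) ∈ ℂ², (z₀, z₁, z₂) ∈ ℂ³ satisfying x₀y₀z₂ + x₁y₁z₀ = x₀y₁z₁ + x₁y₀z₁ such that: (y₀, y₁) is a scalar multiple of (x₀, x₁); (x₁, x₀) is a scalar multiple of (x₀, x₁), (y₁, y₀) is a scalar multiple of (y₀, y₁), and (z₂, z₁, z₀) is a scalar multiple of (z₀, z₁, z₂); and (x₀, −x₁) is a scalar multiple of (x₀, x₁), (y₀, −y₁) is a scalar multiple of (y₀, y₁), and (z₀, −z₁, z₂) is a scalar multiple of (z₀, z₁, z₂). -/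
theorem stmt_12 :
    ¬ ∃ x₀ x₁ y₀ y₁ z₀ z₁ z₂ : ℂ,
      (x₀, x₁) ≠ (0, 0) ∧ (y₀, y₁) ≠ (0, 0) ∧ (z₀, z₁, z₂) ≠ (0, 0, 0) ∧
      x₀ * y₀ * z₂ + x₁ * y₁ * z₀ = x₀ * y₁ * z₁ + x₁ * y₀ * z₁ ∧
      (∃ c : ℂ, (y₀, y₁) = (c * x₀, c * x₁)) ∧
      (∃ c : ℂ, (x₁, x₀) = (c * x₀, c * x₁)) ∧
      (∃ c : ℂ, (y₁, y₀) = (c * y₀, c * y₁)) ∧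
      (∃ c : ℂ, (z₂, z₁, z₀) = (c * z₀, c * z₁, c * z₂)) ∧
      (∃ c : ℂ, (x₀, -x₁) = (c * x₀, c * x₁)) ∧
      (∃ c : ℂ, (y₀, -y₁) = (c * y₀, c * y₁)) ∧
      (∃ c : ℂ, (z₀, -z₁, z₂) = (c * z₀, c * z₁, c * z₂)) := by
  rintro ⟨x₀, x₁, y₀, y₁, z₀, z₁, z₂, hx, -, -, -, -, ⟨c, hc⟩, -, -, ⟨d, hd⟩, -, -⟩
  simp only [Prod.mk.injEq, ne_eq, not_and] at hx hc hd
  obtain ⟨hc1, hc2⟩ := hc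
  obtain ⟨hd1, hd2⟩ := hd
  by_cases h0 : x₀ = 0
  · exact hx h0 (by rw [hc1, h0, mul_zero])
  · have hd' : d = 1 := by
      field_simp at hd1
      tauto
    have h1 : x₁ = 0 := by
      rw [hd'] at hd2; linear_combination (-(1:ℂ)/2) * hd2
    exact h0 (by rw [hc2, h1, mul_zero])
end

section
/- Let d ≥ 2 be a natural number and let ω ∈ ℂ be a primitive d-th root of unity. There are no nonzero vectors (u, v) ∈ ℂ² and (x, y, z) ∈ ℂ³ satisfying u²(1967x^d + 1973y^d + 1983z^d) + v²(1983x^d + 1973y^d + 1967z^d) = 0 such that (u, −v) is a complex scalar multiple of (u, v), (ωx, y, z) is a complex scalar multiple of (x, y, z), and (x, ωy, z) is a complex scalar multiple of (x, y, z). -/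
theorem stmt_15 (d : ℕ) (hd : 2 ≤ d) (ω : ℂ) (hω : IsPrimitiveRoot ω d) :
    ¬ ∃ u v x y z : ℂ,
      (u, v) ≠ (0, 0) ∧ (x, y, z) ≠ (0, 0, 0) ∧
      u ^ 2 * (1967 * x ^ d + 1973 * y ^ d + 1983 * z ^ d)
        + v ^ 2 * (1983 * x ^ d + 1973 * y ^ d + 1967 * z ^ d) = 0 ∧
      (∃ c : ℂ, (u, -v) = (c * u, c * v)) ∧
      (∃ c : ℂ, (ω * x, y, z) = (c * x, c * y, c * z)) ∧
      (∃ c : ℂ, (x, ω * y, z) = (c * x, c * y, c * z)) := by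
  rintro ⟨u, v, x, y, z, huv, hxyz, heq, ⟨c1, hc1⟩, ⟨c2, hc2⟩, ⟨c3, hc3⟩⟩
  have hω1 : ω ≠ 1 := hω.ne_one (by omega)
  have hd0 : d ≠ 0 := by omega
  simp only [ne_eq, Prod.mk.injEq, not_and] at hc1 hc2 hc3 huv hxyz
  obtain ⟨h1, h2⟩ := hc1
  obtain ⟨h3, h4, h5⟩ := hc2
  obtain ⟨h6, h7, h8⟩ := hc3
  -- u = 0 ∨ v = 0
  have huv0 : u = 0 ∨ v = 0 := by
    by_cases hu : u = 0
    · exact Or.inl hu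
    · right
      have hc : c1 = 1 := mul_right_cancel₀ hu (by linear_combination -h1 : c1 * u = 1 * u)
      rw [hc, one_mul] at h2
      have h2' : (2 : ℂ) * v = 0 := by linear_combination -h2
      exact (mul_eq_zero.mp h2').resolve_left two_ne_zero
  have hx0 : x = 0 ∨ (y = 0 ∧ z = 0) := by
    by_cases hy : y = 0
    · by_cases hz : z = 0
      · exact Or.inr ⟨hy, hz⟩
      · left
        have hc : c2 = 1 := mul_right_cancel₀ hz (by linear_combination -h5 : c2 * z = 1 * z)
        rw [hc, one_mul] at h3
        rcases mul_eq_zero.mp (show (ω - 1) * x = 0 by linear_combination h3) with h | h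
        · exact absurd (by linear_combination h : ω = 1) hω1
        · exact h
    · left
      have hc : c2 = 1 := mul_right_cancel₀ hy (by linear_combination -h4 : c2 * y = 1 * y)
      rw [hc, one_mul] at h3
      rcases mul_eq_zero.mp (show (ω - 1) * x = 0 by linear_combination h3) with h | h
      · exact absurd (by linear_combination h : ω = 1) hω1
      · exact h
  have hy0 : y = 0 ∨ (x = 0 ∧ z = 0) := by
    by_cases hx : x = 0
    · by_cases hz : z = 0
      · exact Or.inr ⟨hx, hz⟩
      · left
        have hc : c3 = 1 := mul_right_cancel₀ hz (by linear_combination -h8 : c3 * z = 1 * z)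
        rw [hc, one_mul] at h7
        rcases mul_eq_zero.mp (show (ω - 1) * y = 0 by linear_combination h7) with h | h
        · exact absurd (by linear_combination h : ω = 1) hω1
        · exact h
    · left
      have hc : c3 = 1 := mul_right_cancel₀ hx (by linear_combination -h6 : c3 * x = 1 * x)
      rw [hc, one_mul] at h7
      rcases mul_eq_zero.mp (show (ω - 1) * y = 0 by linear_combination h7) with h | h
      · exact absurd (by linear_combination h : ω = 1) hω1
      · exact h
  rcases hx0 with hx | ⟨hy, hz⟩
  · rcases hy0 with hy | ⟨hx', hz⟩
    · -- x = 0, y = 0, so z ≠ 0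
      have hz : z ≠ 0 := hxyz hx hy
      have hzd : z ^ d ≠ 0 := pow_ne_zero _ hz
      rw [hx, hy, zero_pow hd0] at heq
      rcases huv0 with hu | hv
      · have hvne : v ≠ 0 := huv hu
        have : v ^ 2 * (1967 * z ^ d) = 0 := by rw [hu] at heq; linear_combination heq
        simp [pow_eq_zero_iff, hvne, hzd] at this
      · have hune : u ≠ 0 := fun hu => huv hu hv
        have : u ^ 2 * (1983 * z ^ d) = 0 := by rw [hv] at heq; linear_combination heq
        simp [pow_eq_zero_iff, hune, hzd] at this
    · -- x = 0, z = 0, y ≠ 0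
      have hy : y ≠ 0 := fun hy => hxyz hx hy hz
      have hyd : y ^ d ≠ 0 := pow_ne_zero _ hy
      rw [hx, hz, zero_pow hd0] at heq
      rcases huv0 with hu | hv
      · have hvne : v ≠ 0 := huv hu
        have : v ^ 2 * (1973 * y ^ d) = 0 := by rw [hu] at heq; linear_combination heq
        simp [pow_eq_zero_iff, hvne, hyd] at this
      · have hune : u ≠ 0 := fun hu => huv hu hv
        have : u ^ 2 * (1973 * y ^ d) = 0 := by rw [hv] at heq; linear_combination heq
        simp [pow_eq_zero_iff, hune, hyd] at this
  · -- y = 0, z = 0, x ≠ 0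
    have hx : x ≠ 0 := fun hx => hxyz hx hy hz
    have hxd : x ^ d ≠ 0 := pow_ne_zero _ hx
    rw [hy, hz, zero_pow hd0] at heq
    rcases huv0 with hu | hv
    · have hvne : v ≠ 0 := huv hu
      have : v ^ 2 * (1983 * x ^ d) = 0 := by rw [hu] at heq; linear_combination heq
      simp [pow_eq_zero_iff, hvne, hxd] at this
    · have hune : u ≠ 0 := fun hu => huv hu hv
      have : u ^ 2 * (1967 * x ^ d) = 0 := by rw [hv] at heq; linear_combination heq
      simp [pow_eq_zero_iff, hune, hxd] at this
end

section
/- Let (u, v) ∈ ℂ² and (x, y, z) ∈ ℂ³ be nonzero vectors such that (v, u) is a complex scalar multiple of (u, v), (−x, y, z) is a complex scalar multiple of (x, y, z), and (x, −y, z) is a complex scalar multiple of (x, y, z). Then x⁴ + y⁴ + z⁴ + 2025(x²y² + x²z² + y²z²) ≠ 0 and u² + v² ≠ 0. -/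
theorem stmt_16 (u v x y z : ℂ)
    (huv : (u, v) ≠ (0, 0)) (hxyz : (x, y, z) ≠ (0, 0, 0))
    (h1 : ∃ c : ℂ, (v, u) = (c * u, c * v))
    (h2 : ∃ c : ℂ, (-x, y, z) = (c * x, c * y, c * z))
    (h3 : ∃ c : ℂ, (x, -y, z) = (c * x, c * y, c * z)) :
    x ^ 4 + y ^ 4 + z ^ 4 + 2025 * (x ^ 2 * y ^ 2 + x ^ 2 * z ^ 2 + y ^ 2 * z ^ 2) ≠ 0
      ∧ u ^ 2 + v ^ 2 ≠ 0 := by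
  obtain ⟨c1, hc1⟩ := h1
  obtain ⟨c2, hc2⟩ := h2
  obtain ⟨c3, hc3⟩ := h3
  simp only [Prod.mk.injEq] at hc1 hc2 hc3
  obtain ⟨ha1, ha2⟩ := hc1
  obtain ⟨hb1, hb2, hb3⟩ := hc2
  obtain ⟨hd1, hd2, hd3⟩ := hc3
  constructor
  · by_cases hx : x = 0
    · by_cases hy : y = 0
      · have hz : z ≠ 0 := fun hz => hxyz (by rw [hx, hy, hz])
        subst hx hy
        intro h
        apply hz
        have h4 : z ^ 4 = 0 := by linear_combination h
        exact pow_eq_zero_iff (by norm_num) |>.mp h4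
      · have hc3 : c3 = -1 := by
          have h : (c3 + 1) * y = 0 := by linear_combination -hd2
          rcases mul_eq_zero.mp h with h | h
          · linear_combination h
          · exact absurd h hy
        have hz : z = 0 := by
          have h : (2 : ℂ) * z = 0 := by rw [hc3] at hd3; linear_combination hd3
          simpa using h
        subst hx hz
        intro h
        apply hy
        have h4 : y ^ 4 = 0 := by linear_combination h
        exact pow_eq_zero_iff (by norm_num) |>.mp h4
    · have hc2 : c2 = -1 := by
        have h : (c2 + 1) * x = 0 := by linear_combination -hb1
        rcases mul_eq_zero.mp h with h | h
        · linear_combination h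
        · exact absurd h hx
      have hy : y = 0 := by
        have h : (2 : ℂ) * y = 0 := by rw [hc2] at hb2; linear_combination hb2
        simpa using h
      have hz : z = 0 := by
        have h : (2 : ℂ) * z = 0 := by rw [hc2] at hb3; linear_combination hb3
        simpa using h
      subst hy hz
      intro h
      apply hx
      have h4 : x ^ 4 = 0 := by linear_combination h
      exact pow_eq_zero_iff (by norm_num) |>.mp h4
  · have hu : u ≠ 0 := by
      intro hu
      have hv : v = 0 := by rw [ha1, hu, mul_zero]
      exact huv (by rw [hu, hv])
    have hc : c1 ^ 2 = 1 := by
      have hthis : u = c1 ^ 2 * u := by linear_combination ha2 + c1 * ha1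
      have h2 : (c1 ^ 2 - 1) * u = 0 := by linear_combination -hthis
      rcases mul_eq_zero.mp h2 with h | h
      · linear_combination h
      · exact absurd h hu
    intro h
    apply hu
    have h2 : (2 : ℂ) * u ^ 2 = 0 := by
      rw [ha1] at h
      calc (2:ℂ) * u ^ 2 = (1 + c1 ^ 2) * u ^ 2 := by rw [hc]; ring
        _ = 0 := by linear_combination h
    have h4 : u ^ 2 = 0 := by simpa using h2
    exact pow_eq_zero_iff (by norm_num) |>.mp h4
end

section
/- There are no nonzero vectors (x₁, y₁), (x₂, y₂), (x₃, y₃) ∈ ℂ² satisfying x₁²x₂y₂x₃² + y₁²x₂y₂y₃² + x₁²x₂²x₃y₃ + x₁y₁x₂²x₃² + y₁²y₂²x₃y₃ + x₁y₁y₂²y₃² = 2025(y₁²y₂²x₃y₃ + x₁y₁y₂²y₃² + y₁²x₂y₂y₃² + x₁²x₂²x₃y₃ + x₁²x₂x₃²y₂ + x₁x₂²x₃²y₁) such that: for each i ∈ {1,2,3} the vector (yᵢ, xᵢ) is a complex scalar multiple of (xᵢ, yᵢ), and moreover (x₂, y₂) is a scalar multiple of (x₁, y₁), (x₃, y₃)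 is a scalar multiple of (x₂, y₂), and (x₁, y₁) is a scalar multiple of (x₃, y₃). -/
theorem stmt_17 :
    ¬ ∃ x₁ y₁ x₂ y₂ x₃ y₃ : ℂ,
      (x₁, y₁) ≠ (0, 0) ∧ (x₂, y₂) ≠ (0, 0) ∧ (x₃, y₃) ≠ (0, 0) ∧
      x₁ ^ 2 * x₂ * y₂ * x₃ ^ 2 + y₁ ^ 2 * x₂ * y₂ * y₃ ^ 2 + x₁ ^ 2 * x₂ ^ 2 * x₃ * y₃
        + x₁ * y₁ * x₂ ^ 2 * x₃ ^ 2 + y₁ ^ 2 * y₂ ^ 2 * x₃ * y₃ + x₁ * y₁ * y₂ ^ 2 * y₃ ^ 2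
        = 2025 * (y₁ ^ 2 * y₂ ^ 2 * x₃ * y₃ + x₁ * y₁ * y₂ ^ 2 * y₃ ^ 2
            + y₁ ^ 2 * x₂ * y₂ * y₃ ^ 2 + x₁ ^ 2 * x₂ ^ 2 * x₃ * y₃
            + x₁ ^ 2 * x₂ * x₃ ^ 2 * y₂ + x₁ * x₂ ^ 2 * x₃ ^ 2 * y₁) ∧
      (∃ c : ℂ, (y₁, x₁) = (c * x₁, c * y₁)) ∧
      (∃ c : ℂ, (y₂, x₂) = (c * x₂, c * y₂)) ∧
      (∃ c : ℂ, (y₃, x₃) = (c * x₃, c * y₃)) ∧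
      (∃ c : ℂ, (x₂, y₂) = (c * x₁, c * y₁)) ∧
      (∃ c : ℂ, (x₃, y₃) = (c * x₂, c * y₂)) ∧
      (∃ c : ℂ, (x₁, y₁) = (c * x₃, c * y₃)) := by
  rintro ⟨x₁, y₁, x₂, y₂, x₃, y₃, h1, h2, h3, heq, ⟨a, ha⟩, ⟨b, hb⟩, ⟨c, hc⟩,
    ⟨d, hd⟩, ⟨e, he⟩, ⟨f, hf⟩⟩
  rw [Prod.mk.injEq] at ha hb hc hd he hf
  obtain ⟨ha1, ha2⟩ := ha
  obtain ⟨hd1, hd2⟩ := hd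
  obtain ⟨he1, he2⟩ := he
  subst ha1 hd1 hd2 he1 he2
  -- x₁ ≠ 0
  have hx1 : x₁ ≠ 0 := by
    intro h; apply h1; rw [h]; simp
  -- d ≠ 0
  have hdne : d ≠ 0 := by
    intro h; apply h2; rw [h]; simp
  -- e ≠ 0
  have hene : e ≠ 0 := by
    intro h; apply h3; rw [h]; simp
  -- a ^ 2 = 1
  have ha2' : a ^ 2 = 1 := by
    have h : (a ^ 2 - 1) * x₁ = 0 := by linear_combination -ha2
    rcases mul_eq_zero.mp h with h' | h'
    · exact sub_eq_zero.mp h'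
    · exact absurd h' hx1
  have hane : a ≠ 0 := by
    intro h; rw [h] at ha2'; norm_num at ha2'
  have key : a * (d ^ 4 * e ^ 2 * x₁ ^ 6) = 0 := by
    linear_combination (-(1 : ℂ)/12144) * heq
      - (a * (a ^ 2 + 1) * (d ^ 4 * e ^ 2 * x₁ ^ 6) / 2) * ha2'
  rcases mul_eq_zero.mp key with h' | h'
  · exact hane h'
  · have := mul_eq_zero.mp h'
    rcases this with h'' | h''
    · rcases mul_eq_zero.mp h'' with h3' | h3'
      · exact hdne (pow_eq_zero_iff (by norm_num) |>.mp h3')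
      · exact hene (pow_eq_zero_iff (by norm_num) |>.mp h3')
    · exact hx1 (pow_eq_zero_iff (by norm_num) |>.mp h'')
end

section
/- There do not exist u, v ∈ ℂ and symmetric 3×3 complex matrices X = (xᵢⱼ) and Y = (yᵢⱼ), with (u, v, X, Y) not identically zero, satisfying all of the following: adj(X) = u·Y, adj(Y) = v·X, X·Y = uv·I₃ (where adj denotes the adjugate matrix and I₃ the 3×3 identity), the linear equations 1967x₁₁ + 1973x₂₂ + 1983x₃₃ = 0, 1967y₁₁ + 1973y₂₂ + 1983y₃₃ = 0, and 2024x₁₁ + 2025x₂₂ + 2024y₁₁ + 2025y₂₂ = u + v, and such that there exist nonzero complex scalars λ₁, λ₂, λ₃ with: negating the entries x₁₂, x₂₃, y₁₂, y₂₃ (keeping all other data fixed) multiplies the tuple (u, v, X, Y) by λ₁; negating the entries x₁₂, x₁₃, y₁₂, y₁₃ multiplies the tuple by λ₂; and the swapped tuple (v, u, Y, X) equals λ₃·(u, v, X, Y). -/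
open Matrix

/-- Negate the entries in positions (1,2), (2,1), (2,3), (3,2) (one-based),
i.e. the coordinates `x₁₂` and `x₂₃` of a symmetric matrix. -/
def negTwelveTwentythree (M : Matrix (Fin 3) (Fin 3) ℂ) : Matrix (Fin 3) (Fin 3) ℂ :=
  Matrix.of fun i j =>
    if (i = 0 ∧ j = 1) ∨ (i = 1 ∧ j = 0) ∨ (i = 1 ∧ j = 2) ∨ (i = 2 ∧ j = 1)
    then -M i j else M i j

/-- Negate the entries in positions (1,2), (2,1), (1,3), (3,1) (one-based),
i.e. the coordinates `x₁₂` and `x₁₃` of a symmetric matrix. -/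
def negTwelveThirteen (M : Matrix (Fin 3) (Fin 3) ℂ) : Matrix (Fin 3) (Fin 3) ℂ :=
  Matrix.of fun i j =>
    if (i = 0 ∧ j = 1) ∨ (i = 1 ∧ j = 0) ∨ (i = 0 ∧ j = 2) ∨ (i = 2 ∧ j = 0)
    then -M i j else M i j

private lemma kill {l x : ℂ} (hl : l ≠ 1) (h : x = l * x) : x = 0 := by
  rcases mul_eq_zero.mp (show (l - 1) * x = 0 by linear_combination -h) with h' | h'
  · exact absurd (by linear_combination h') hl
  · exact h'

private lemma key {a b c u : ℂ} (h1 : a*a = u*u) (h2 : b*b = u*u) (h3 : c*c = u*u)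
    (h4 : 1967*a + 1973*b + 1983*c = 0) : u = 0 := by
  rcases mul_self_eq_mul_self_iff.mp h1 with ha | ha <;>
  rcases mul_self_eq_mul_self_iff.mp h2 with hb | hb <;>
  rcases mul_self_eq_mul_self_iff.mp h3 with hc | hc <;>
  subst ha <;> subst hb <;> subst hc <;>
  first
    | linear_combination h4 / 5923
    | linear_combination h4 / 1957
    | linear_combination h4 / 1977
    | linear_combination h4 / (-1989)
    | linear_combination h4 / 1989
    | linear_combination h4 / (-1977)
    | linear_combination h4 / (-1957)
    | linear_combination h4 / (-5923)

theorem stmt_18 :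
    ¬ ∃ (u v : ℂ) (X Y : Matrix (Fin 3) (Fin 3) ℂ),
      X.IsSymm ∧ Y.IsSymm ∧
      ¬ (u = 0 ∧ v = 0 ∧ X = 0 ∧ Y = 0) ∧
      X.adjugate = u • Y ∧ Y.adjugate = v • X ∧
      X * Y = (u * v) • (1 : Matrix (Fin 3) (Fin 3) ℂ) ∧
      1967 * X 0 0 + 1973 * X 1 1 + 1983 * X 2 2 = 0 ∧
      1967 * Y 0 0 + 1973 * Y 1 1 + 1983 * Y 2 2 = 0 ∧
      2024 * X 0 0 + 2025 * X 1 1 + 2024 * Y 0 0 + 2025 * Y 1 1 = u + v ∧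
      (∃ l₁ : ℂ, l₁ ≠ 0 ∧ u = l₁ * u ∧ v = l₁ * v ∧
        negTwelveTwentythree X = l₁ • X ∧ negTwelveTwentythree Y = l₁ • Y) ∧
      (∃ l₂ : ℂ, l₂ ≠ 0 ∧ u = l₂ * u ∧ v = l₂ * v ∧
        negTwelveThirteen X = l₂ • X ∧ negTwelveThirteen Y = l₂ • Y) ∧
      (∃ l₃ : ℂ, l₃ ≠ 0 ∧ v = l₃ * u ∧ u = l₃ * v ∧ Y = l₃ • X ∧ X = l₃ • Y) := by
  rintro ⟨u, v, X, Y, hXs, hYs, hnz, hA, hB, hP, L1, L2, L3,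
    ⟨l₁, hl1, hu1, hv1, hX1, hY1⟩, ⟨l₂, hl2, hu2, hv2, hX2, hY2⟩,
    ⟨l₃, hl3, hv3, hu3, hY3, hX3⟩⟩
  -- symmetry facts
  have sx1 : X 1 0 = X 0 1 := by simpa using congrFun (congrFun hXs 0) 1
  have sx2 : X 2 0 = X 0 2 := by simpa using congrFun (congrFun hXs 0) 2
  have sx3 : X 2 1 = X 1 2 := by simpa using congrFun (congrFun hXs 1) 2
  have sy1 : Y 1 0 = Y 0 1 := by simpa using congrFun (congrFun hYs 0) 1
  have sy2 : Y 2 0 = Y 0 2 := by simpa using congrFun (congrFun hYs 0) 2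
  have sy3 : Y 2 1 = Y 1 2 := by simpa using congrFun (congrFun hYs 1) 2
  rw [Matrix.adjugate_fin_three] at hA hB
  have A00 := congrFun (congrFun hA 0) 0
  have A11 := congrFun (congrFun hA 1) 1
  have A22 := congrFun (congrFun hA 2) 2
  have B00 := congrFun (congrFun hB 0) 0
  have B11 := congrFun (congrFun hB 1) 1
  have B22 := congrFun (congrFun hB 2) 2
  simp only [Matrix.smul_apply, smul_eq_mul, Matrix.cons_val', Matrix.cons_val_zero,
    Matrix.cons_val_one, Matrix.head_cons, Matrix.head_fin_const, Matrix.empty_val',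
    Matrix.cons_val_fin_one, Matrix.cons_val_two, Matrix.tail_cons, Matrix.of_apply,
    sx1, sx2, sx3, sy1, sy2, sy3] at A00 A11 A22 B00 B11 B22
  -- product diagonal entries
  have P00 := congrFun (congrFun hP 0) 0
  have P11 := congrFun (congrFun hP 1) 1
  have P22 := congrFun (congrFun hP 2) 2
  simp only [Matrix.mul_apply, Fin.sum_univ_three, Matrix.smul_apply, Matrix.one_apply,
    smul_eq_mul, if_true, if_pos rfl, sx1, sx2, sx3, sy1, sy2, sy3, mul_one] at P00 P11 P22
  -- entries of the involution equations
  have E := fun i j => congrFun (congrFun hX1 i) j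
  have F := fun i j => congrFun (congrFun hY1 i) j
  have G := fun i j => congrFun (congrFun hX2 i) j
  have H := fun i j => congrFun (congrFun hY2 i) j
  simp only [negTwelveTwentythree, negTwelveThirteen, Matrix.of_apply, Matrix.smul_apply,
    smul_eq_mul] at E F G H
  have E00 := E 0 0; have E11 := E 1 1; have E22 := E 2 2
  have E01 := E 0 1; have E02 := E 0 2; have E12 := E 1 2
  have F00 := F 0 0; have F11 := F 1 1; have F22 := F 2 2
  have F01 := F 0 1; have F02 := F 0 2; have F12 := F 1 2
  have G00 := G 0 0; have G11 := G 1 1; have G22 := G 2 2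
  have G01 := G 0 1; have G02 := G 0 2; have G12 := G 1 2
  have H00 := H 0 0; have H11 := H 1 1; have H22 := H 2 2
  have H01 := H 0 1; have H02 := H 0 2; have H12 := H 1 2
  norm_num at E00 E11 E22 E01 E02 E12 F00 F11 F22 F01 F02 F12 G00 G11 G22 G01 G02 G12 H00 H11 H22 H01 H02 H12
  -- l3 entries
  have K := fun i j => congrFun (congrFun hY3 i) j
  simp only [Matrix.smul_apply, smul_eq_mul] at K
  have K00 := K 0 0; have K11 := K 1 1; have K22 := K 2 2
  have K01 := K 0 1; have K02 := K 0 2; have K12 := K 1 2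
  by_cases h1 : l₁ = 1
  · by_cases h2 : l₂ = 1
    · -- case A: all off-diagonals vanish
      subst h1; subst h2
      have zx01 : X 0 1 = 0 := by linear_combination (-1/2 : ℂ) * E01
      have zx12 : X 1 2 = 0 := by linear_combination (-1/2 : ℂ) * E12
      have zx02 : X 0 2 = 0 := by linear_combination (-1/2 : ℂ) * G02
      have zy01 : Y 0 1 = 0 := by linear_combination (-1/2 : ℂ) * F01
      have zy12 : Y 1 2 = 0 := by linear_combination (-1/2 : ℂ) * F12
      have zy02 : Y 0 2 = 0 := by linear_combination (-1/2 : ℂ) * H02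
      have qa : X 0 0 * X 0 0 = u * u := mul_left_cancel₀ hl3
        (by linear_combination P00 - X 0 0 * K00 + u * hv3 - Y 0 1 * zx01 - Y 0 2 * zx02)
      have qb : X 1 1 * X 1 1 = u * u := mul_left_cancel₀ hl3
        (by linear_combination P11 - X 1 1 * K11 + u * hv3 - Y 0 1 * zx01 - Y 1 2 * zx12)
      have qc : X 2 2 * X 2 2 = u * u := mul_left_cancel₀ hl3
        (by linear_combination P22 - X 2 2 * K22 + u * hv3 - Y 0 2 * zx02 - Y 1 2 * zx12)
      have hu : u = 0 := key qa qb qc L1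
      have zx00 : X 0 0 = 0 := by
        have := qa; rw [hu] at this; exact mul_self_eq_zero.mp (by linear_combination this)
      have zx11 : X 1 1 = 0 := by
        have := qb; rw [hu] at this; exact mul_self_eq_zero.mp (by linear_combination this)
      have zx22 : X 2 2 = 0 := by
        have := qc; rw [hu] at this; exact mul_self_eq_zero.mp (by linear_combination this)
      have hv : v = 0 := by rw [hv3, hu, mul_zero]
      have zy00 : Y 0 0 = 0 := by rw [K00, zx00, mul_zero]
      have zy11 : Y 1 1 = 0 := by rw [K11, zx11, mul_zero]
      have zy22 : Y 2 2 = 0 := by rw [K22, zx22, mul_zero]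
      exact hnz ⟨hu, hv,
        by rw [Matrix.eta_fin_three X, sx1, sx2, sx3, zx00, zx11, zx22, zx01, zx02, zx12]
           ext i j; fin_cases i <;> fin_cases j <;> rfl,
        by rw [Matrix.eta_fin_three Y, sy1, sy2, sy3, zy00, zy11, zy22, zy01, zy02, zy12]
           ext i j; fin_cases i <;> fin_cases j <;> rfl⟩
    · -- l2 ≠ 1 : diagonals and u,v vanish
      have hu : u = 0 := kill h2 hu2
      have hv : v = 0 := kill h2 hv2
      have zx00 : X 0 0 = 0 := kill h2 G00
      have zx11 : X 1 1 = 0 := kill h2 G11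
      have zx22 : X 2 2 = 0 := kill h2 G22
      have zy00 : Y 0 0 = 0 := kill h2 H00
      have zy11 : Y 1 1 = 0 := kill h2 H11
      have zy22 : Y 2 2 = 0 := kill h2 H22
      have zx12 : X 1 2 = 0 := mul_self_eq_zero.mp
        (by linear_combination -A00 + X 2 2 * zx11 - Y 0 0 * hu)
      have zx02 : X 0 2 = 0 := mul_self_eq_zero.mp
        (by linear_combination -A11 + X 2 2 * zx00 - Y 1 1 * hu)
      have zx01 : X 0 1 = 0 := mul_self_eq_zero.mp
        (by linear_combination -A22 + X 1 1 * zx00 - Y 2 2 * hu)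
      have zy12 : Y 1 2 = 0 := mul_self_eq_zero.mp
        (by linear_combination -B00 + Y 2 2 * zy11 - X 0 0 * hv)
      have zy02 : Y 0 2 = 0 := mul_self_eq_zero.mp
        (by linear_combination -B11 + Y 2 2 * zy00 - X 1 1 * hv)
      have zy01 : Y 0 1 = 0 := mul_self_eq_zero.mp
        (by linear_combination -B22 + Y 1 1 * zy00 - X 2 2 * hv)
      exact hnz ⟨hu, hv,
        by rw [Matrix.eta_fin_three X, sx1, sx2, sx3, zx00, zx11, zx22, zx01, zx02, zx12]
           ext i j; fin_cases i <;> fin_cases j <;> rfl,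
        by rw [Matrix.eta_fin_three Y, sy1, sy2, sy3, zy00, zy11, zy22, zy01, zy02, zy12]
           ext i j; fin_cases i <;> fin_cases j <;> rfl⟩
  · -- l1 ≠ 1 : diagonals and u,v vanish
    have hu : u = 0 := kill h1 hu1
    have hv : v = 0 := kill h1 hv1
    have zx00 : X 0 0 = 0 := kill h1 E00
    have zx11 : X 1 1 = 0 := kill h1 E11
    have zx22 : X 2 2 = 0 := kill h1 E22
    have zy00 : Y 0 0 = 0 := kill h1 F00
    have zy11 : Y 1 1 = 0 := kill h1 F11
    have zy22 : Y 2 2 = 0 := kill h1 F22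
    have zx12 : X 1 2 = 0 := mul_self_eq_zero.mp
      (by linear_combination -A00 + X 2 2 * zx11 - Y 0 0 * hu)
    have zx02 : X 0 2 = 0 := mul_self_eq_zero.mp
      (by linear_combination -A11 + X 2 2 * zx00 - Y 1 1 * hu)
    have zx01 : X 0 1 = 0 := mul_self_eq_zero.mp
      (by linear_combination -A22 + X 1 1 * zx00 - Y 2 2 * hu)
    have zy12 : Y 1 2 = 0 := mul_self_eq_zero.mp
      (by linear_combination -B00 + Y 2 2 * zy11 - X 0 0 * hv)
    have zy02 : Y 0 2 = 0 := mul_self_eq_zero.mp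
      (by linear_combination -B11 + Y 2 2 * zy00 - X 1 1 * hv)
    have zy01 : Y 0 1 = 0 := mul_self_eq_zero.mp
      (by linear_combination -B22 + Y 1 1 * zy00 - X 2 2 * hv)
    exact hnz ⟨hu, hv,
      by rw [Matrix.eta_fin_three X, sx1, sx2, sx3, zx00, zx11, zx22, zx01, zx02, zx12]
         ext i j; fin_cases i <;> fin_cases j <;> rfl,
      by rw [Matrix.eta_fin_three Y, sy1, sy2, sy3, zy00, zy11, zy22, zy01, zy02, zy12]
         ext i j; fin_cases i <;> fin_cases j <;> rfl⟩
end

section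
/- There are no nonzero vectors (x₀, x₁), (y₀, y₁), (z₀, z₁) ∈ ℂ² such that all of the following hold: (x₁, x₀) is a complex scalar multiple of (x₀, x₁), (y₁, y₀) is a complex scalar multiple of (y₀, y₁), and (z₁, z₀) is a complex scalar multiple of (z₀, z₁); (y₀, y₁) is a complex scalar multiple of (x₀, x₁); and (x₀, −x₁) is a complex scalar multiple of (x₀, x₁) and (y₀, −y₁) is a complex scalar multiple of (y₀, y₁). -/
theorem stmt_19 :
    ¬ ∃ x₀ x₁ y₀ y₁ z₀ z₁ : ℂ,
      (x₀, x₁) ≠ (0, 0) ∧ (y₀, y₁) ≠ (0, 0) ∧ (z₀, z₁) ≠ (0, 0) ∧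
      (∃ c : ℂ, (x₁, x₀) = (c * x₀, c * x₁)) ∧
      (∃ c : ℂ, (y₁, y₀) = (c * y₀, c * y₁)) ∧
      (∃ c : ℂ, (z₁, z₀) = (c * z₀, c * z₁)) ∧
      (∃ c : ℂ, (y₀, y₁) = (c * x₀, c * x₁)) ∧
      (∃ c : ℂ, (x₀, -x₁) = (c * x₀, c * x₁)) ∧
      (∃ c : ℂ, (y₀, -y₁) = (c * y₀, c * y₁)) := by
  rintro ⟨x₀, x₁, y₀, y₁, z₀, z₁, hx, -, -, ⟨c, hc⟩, -, -, -, ⟨e, he⟩, -⟩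
  simp only [ne_eq, Prod.mk.injEq, not_and] at hx
  rw [Prod.ext_iff] at hc he
  obtain ⟨hc1, hc2⟩ := hc
  obtain ⟨he1, he2⟩ := he
  have hx0 : x₀ ≠ 0 := by
    intro h
    exact hx h (by simpa [h] using hc1)
  have he' : e = 1 := by
    have h0 : (e - 1) * x₀ = 0 := by linear_combination -he1
    rcases mul_eq_zero.mp h0 with h | h
    · exact sub_eq_zero.mp h
    · exact absurd h hx0
  have : x₁ = 0 := by
    rw [he'] at he2
    linear_combination (-(1:ℂ)/2) * he2
  have : x₀ = 0 := by simpa [this] using hc2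
  exact hx0 this
end
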